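/- For two intervals a = [a₁, a₂] and b = [b₁, b₂] with a₁ ≤ a₂ and b₁ ≤ b₂, and for any α > 0, the satisfaction index SD(a ≼ b) = max((b₂ - a₁)/((a₂ - a₁) + (b₂ - b₁)), 0) satisfies SD(a ≼ b) ≥ α if and only if (1 - α)·b₂ + α·b₁ ≥ (1 - α)·a₁ + α·a₂, provided (a₂ - a₁) + (b₂ - b₁) > 0. -/

import Mathlib

theorem le_max_div_zero_iff {K : Type*} [Field K] [LinearOrder K] [IsStrictOrderedRing K]
    {α x w : K} (hα : 0 < α) (hw : 0 < w) : α ≤ max (x / w) 0 ↔ α * w ≤ x := by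
  rw [le_max_iff, le_div_iff₀ hw, or_iff_left hα.not_ge]

theorem stmt_0_general (a₁ a₂ b₁ b₂ α : ℝ)
    (hα : 0 < α) (hw : (a₂ - a₁) + (b₂ - b₁) > 0) :
    max ((b₂ - a₁) / ((a₂ - a₁) + (b₂ - b₁))) 0 ≥ α ↔
      (1 - α) * b₂ + α * b₁ ≥ (1 - α) * a₁ + α * a₂ := by
  rw [ge_iff_le, le_max_div_zero_iff hα hw]
  constructor <;> intro h <;> linarith

theorem stmt_0 (a₁ a₂ b₁ b₂ α : ℝ) (ha : a₁ ≤ a₂) (hb : b₁ ≤ b₂)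
    (hα : 0 < α) (hw : (a₂ - a₁) + (b₂ - b₁) > 0) :
    max ((b₂ - a₁) / ((a₂ - a₁) + (b₂ - b₁))) 0 ≥ α ↔
      (1 - α) * b₂ + α * b₁ ≥ (1 - α) * a₁ + α * a₂ :=
  stmt_0_general a₁ a₂ b₁ b₂ α hα hw
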